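/- For L > 0 the q-trinomial coefficient satisfies the recurrence T(n,d,L) = q^{L-d} T(n, d-1, L-1) + T(n-1, d, L-1) + q^{d-n+1} T(n-1, d+1, L-1). -/

import Mathlib

/-!
Write the summand of `T(n,d,L)` as `q^{k(k+d-n)}` times the `q`-multinomial coefficient
`(q)_L / ((q)_a (q)_b (q)_c)` with `(a, b, c) = (k, L-2k-d, k+d)`. Splitting
`1 - q^L = (1 - q^a) + q^a (1 - q^b) + q^{a+b} (1 - q^c)` gives a Pascal rule lowering one of
`a, b, c` by one, and the three resulting sums are, after adjusting the power of `q` and shifting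
`k` in the first, the three trinomials on the right.
-/

/- `qq` plays the role of the formal variable `q`, as an element of the
field of rational functions over `ℚ`. -/
noncomputable def qq : RatFunc ℚ := RatFunc.X

/-- `(q)_n = ∏_{i=1}^n (1 - q^i)`. -/
noncomputable def qp (n : ℕ) : RatFunc ℚ := ∏ i ∈ Finset.range n, (1 - qq ^ (i + 1))

/-- `(q)_n` for an integer index, declared to be `0` for negative `n`
(so that terms with a negative factorial index vanish upon division). -/
noncomputable def qpz (n : ℤ) : RatFunc ℚ := if 0 ≤ n then qp n.toNat else 0

/-- The Andrews–Baxter `q`-trinomial coefficient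
`T(n,d,L) = Σ_k q^{k(k+d-n)} (q)_L / ((q)_k (q)_{k+d} (q)_{L-2k-d})`,
where terms with a negative factorial index are zero.  (Any term with a
nonzero contribution has `k ≤ L`, so the range below suffices.) -/
noncomputable def qT (n d : ℤ) (L : ℕ) : RatFunc ℚ :=
  ∑ k ∈ Finset.range (L + 1),
    qq ^ ((k : ℤ) * ((k : ℤ) + d - n)) * qp L /
      (qp k * qpz ((k : ℤ) + d) * qpz ((L : ℤ) - 2 * k - d))

open Finset

lemma qq_ne_zero : qq ≠ 0 := RatFunc.X_ne_zero

lemma qq_zpow_ne_one {m : ℤ} (hm : m ≠ 0) : qq ^ m ≠ 1 := by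
  classical
  intro h
  have hval := RatFunc.inftyValuation.X_zpow ℚ m
  rw [← qq, h, map_one] at hval
  exact hm (WithZero.exp_eq_one.mp hval.symm)

lemma qp_succ (n : ℕ) : qp (n + 1) = qp n * (1 - qq ^ (n + 1)) := prod_range_succ _ _

lemma qpz_natCast (n : ℕ) : qpz n = qp n := by simp [qpz]

lemma qpz_of_neg {m : ℤ} (hm : m < 0) : qpz m = 0 := by simp [qpz, not_le.2 hm]

lemma qpz_of_pos {m : ℤ} (hm : 0 < m) : qpz m = qpz (m - 1) * (1 - qq ^ m) := by
  obtain ⟨n, rfl⟩ : ∃ n : ℕ, m = n + 1 := ⟨(m - 1).toNat, by omega⟩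
  rw [add_sub_cancel_right, ← Nat.cast_succ, qpz_natCast, qpz_natCast, qp_succ, ← zpow_natCast]

/-- For `m ≤ 0` both sides are `0`. -/
lemma one_sub_qq_zpow_mul_inv_qpz (m : ℤ) : (1 - qq ^ m) * (qpz m)⁻¹ = (qpz (m - 1))⁻¹ := by
  rcases lt_trichotomy m 0 with hm | rfl | hm
  · rw [qpz_of_neg hm, qpz_of_neg (by omega), inv_zero, mul_zero]
  · rw [zpow_zero, sub_self, zero_mul, qpz_of_neg (by norm_num), inv_zero]
  · have hne : 1 - qq ^ m ≠ 0 := sub_ne_zero.2 (qq_zpow_ne_one hm.ne').symm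
    rw [qpz_of_pos hm, mul_inv, mul_left_comm, mul_inv_cancel₀ hne, mul_one]

/-- The `q`-multinomial coefficient `[L; a, b, c]_q` when `a + b + c = L`. -/
noncomputable def qMultinomial (L : ℕ) (a b c : ℤ) : RatFunc ℚ := qp L / (qpz a * qpz b * qpz c)

lemma qMultinomial_of_neg {L : ℕ} {a b c : ℤ} (h : a < 0 ∨ b < 0 ∨ c < 0) :
    qMultinomial L a b c = 0 := by
  rcases h with h | h | h <;> simp [qMultinomial, qpz_of_neg h]

lemma qMultinomial_succ (M : ℕ) {a b c : ℤ} (h : a + b + c = M + 1) :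
    qMultinomial (M + 1) a b c = qMultinomial M (a - 1) b c +
      qq ^ a * qMultinomial M a (b - 1) c + qq ^ (a + b) * qMultinomial M a b (c - 1) := by
  have hsplit : 1 - qq ^ (M + 1) =
      (1 - qq ^ a) + qq ^ a * (1 - qq ^ b) + qq ^ (a + b) * (1 - qq ^ c) := by
    rw [← zpow_natCast, Nat.cast_succ, ← h, zpow_add₀ qq_ne_zero,
      zpow_add₀ qq_ne_zero]
    ring
  rw [qMultinomial, qp_succ, hsplit]
  simp only [qMultinomial, div_eq_mul_inv, mul_inv]
  linear_combination qp M * (qpz b)⁻¹ * (qpz c)⁻¹ * one_sub_qq_zpow_mul_inv_qpz a +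
    qq ^ a * qp M * (qpz a)⁻¹ * (qpz c)⁻¹ * one_sub_qq_zpow_mul_inv_qpz b +
    qq ^ (a + b) * qp M * (qpz a)⁻¹ * (qpz b)⁻¹ * one_sub_qq_zpow_mul_inv_qpz c

lemma qT_eq_sum (n d : ℤ) {L N : ℕ} (hN : L + 1 ≤ N) :
    qT n d L = ∑ k ∈ range N,
      qq ^ ((k : ℤ) * (k + d - n)) * qMultinomial L k (L - 2 * k - d) (k + d) := by
  rw [qT, ← sum_subset (range_subset_range.2 hN)]
  · refine sum_congr rfl fun k _ => ?_
    rw [qMultinomial, qpz_natCast, mul_div_assoc, mul_right_comm (qp k)]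
  · intro k _ hk
    rw [mem_range, not_lt] at hk
    rw [qMultinomial_of_neg, mul_zero]
    omega

section PascalPieces

variable (n d : ℤ) (M : ℕ)

lemma sum_qMultinomial_lower_first :
    ∑ k ∈ range (M + 2), qq ^ ((k : ℤ) * (k + d - n)) *
      qMultinomial M (k - 1) (M + 1 - 2 * k - d) (k + d) =
      qq ^ (d - n + 1) * qT (n - 1) (d + 1) M := by
  rw [sum_range_succ', qMultinomial_of_neg (by omega), mul_zero, add_zero,
    qT_eq_sum _ _ le_rfl, mul_sum]
  refine sum_congr rfl fun k _ => ?_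
  push_cast
  rw [← mul_assoc, ← zpow_add₀ qq_ne_zero]
  congr 2 <;> ring

lemma sum_qMultinomial_lower_second :
    ∑ k ∈ range (M + 2), qq ^ ((k : ℤ) * (k + d - n)) *
      (qq ^ (k : ℤ) * qMultinomial M k (M + 1 - 2 * k - d - 1) (k + d)) =
      qT (n - 1) d M := by
  rw [qT_eq_sum _ _ (Nat.le_succ (M + 1))]
  refine sum_congr rfl fun k _ => ?_
  rw [← mul_assoc, ← zpow_add₀ qq_ne_zero]
  congr 2 <;> ring

lemma sum_qMultinomial_lower_third :
    ∑ k ∈ range (M + 2), qq ^ ((k : ℤ) * (k + d - n)) *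
      (qq ^ ((k : ℤ) + (M + 1 - 2 * k - d)) * qMultinomial M k (M + 1 - 2 * k - d) (k + d - 1)) =
      qq ^ ((M : ℤ) + 1 - d) * qT n (d - 1) M := by
  rw [qT_eq_sum _ _ (Nat.le_succ (M + 1)), mul_sum]
  refine sum_congr rfl fun k _ => ?_
  rw [← mul_assoc, ← mul_assoc, ← zpow_add₀ qq_ne_zero, ← zpow_add₀ qq_ne_zero]
  congr 2 <;> ring

end PascalPieces

/-- For `L > 0`:
`T(n,d,L) = q^{L-d} T(n,d-1,L-1) + T(n-1,d,L-1) + q^{d-n+1} T(n-1,d+1,L-1)`. -/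
theorem qT_recurrence₂ (n d : ℤ) (L : ℕ) (hL : 0 < L) :
    qT n d L =
      qq ^ ((L : ℤ) - d) * qT n (d - 1) (L - 1) + qT (n - 1) d (L - 1) +
        qq ^ (d - n + 1) * qT (n - 1) (d + 1) (L - 1) := by
  obtain ⟨M, rfl⟩ : ∃ M, L = M + 1 := ⟨L - 1, by omega⟩
  rw [Nat.add_sub_cancel, qT_eq_sum n d le_rfl]
  push_cast
  rw [sum_congr rfl fun k _ => by rw [qMultinomial_succ M (by ring)]]
  simp only [mul_add, sum_add_distrib]
  rw [sum_qMultinomial_lower_first, sum_qMultinomial_lower_second,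
    sum_qMultinomial_lower_third]
  ring
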